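/- arXiv:2311.09461 — 3 statements merged into one kernel-verified Lean document; each statement's English description precedes it below -/
import Mathlib

section
/- Let χ be a permutation of [n] and J a nonempty subset of [n]. Define 𝔖(J) = χ⁻¹(S(χ(S(J)))), where S(·) denotes the minimal segment containing a set, and define 𝔖^1(J) = 𝔖(J), 𝔖^{k+1}(J) = 𝔖(𝔖^k(J)). Then for every k ≥ 1: 𝔖^k(J) ⊆ 𝔖^{k+1}(J), 𝔖^k(J) ⊆ B_χ(J), and 𝔖^{k+1}(J) = 𝔖^k(J) if and only if 𝔖^k(J) = B_χ(J). -/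
/-- A segment of `[n]` (as a finset): nonempty and order-convex. -/
def IsSegmentF {n : ℕ} (S : Finset (Fin n)) : Prop :=
  S.Nonempty ∧ ∀ a ∈ S, ∀ c ∈ S, ∀ b : Fin n, a ≤ b → b ≤ c → b ∈ S

/-- A block of a permutation `χ` of `[n]`: a segment whose image under `χ` is a segment. -/
def IsBlockF {n : ℕ} (χ : Equiv.Perm (Fin n)) (B : Finset (Fin n)) : Prop :=
  IsSegmentF B ∧ IsSegmentF (B.image ⇑χ)

/-- `S(J)`: the minimal segment containing `J`, i.e. `{min J, …, max J}` (and `∅` if `J = ∅`). -/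
noncomputable def seg {n : ℕ} (J : Finset (Fin n)) : Finset (Fin n) :=
  if h : J.Nonempty then Finset.Icc (J.min' h) (J.max' h) else ∅

/-- `𝔖(J) = χ⁻¹(S(χ(S(J))))`. -/
noncomputable def frakS {n : ℕ} (χ : Equiv.Perm (Fin n)) (J : Finset (Fin n)) : Finset (Fin n) :=
  (seg ((seg J).image ⇑χ)).image ⇑χ.symm

lemma subset_seg {n : ℕ} (J : Finset (Fin n)) : J ⊆ seg J := by
  intro x hx
  have hJ : J.Nonempty := ⟨x, hx⟩
  simp only [seg, dif_pos hJ, Finset.mem_Icc]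
  exact ⟨Finset.min'_le J x hx, Finset.le_max' J x hx⟩

lemma segment_seg {n : ℕ} (J : Finset (Fin n)) (hJ : J.Nonempty) : IsSegmentF (seg J) := by
  refine ⟨⟨J.min' hJ, subset_seg J (J.min'_mem hJ)⟩, ?_⟩
  intro a ha c hc b hab hbc
  simp only [seg, dif_pos hJ, Finset.mem_Icc] at *
  exact ⟨le_trans ha.1 hab, le_trans hbc hc.2⟩

lemma seg_subset_of_segment {n : ℕ} {J S : Finset (Fin n)} (hS : IsSegmentF S)
    (h : J ⊆ S) : seg J ⊆ S := by
  by_cases hJ : J.Nonempty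
  · intro x hx
    simp only [seg, dif_pos hJ, Finset.mem_Icc] at hx
    exact hS.2 _ (h (J.min'_mem hJ)) _ (h (J.max'_mem hJ)) x hx.1 hx.2
  · simp [seg, hJ]

lemma subset_frakS {n : ℕ} (χ : Equiv.Perm (Fin n)) (J : Finset (Fin n)) :
    J ⊆ frakS χ J := by
  intro x hx
  have h1 : χ x ∈ (seg J).image ⇑χ :=
    Finset.mem_image.mpr ⟨x, subset_seg J hx, rfl⟩
  have h2 : χ x ∈ seg ((seg J).image ⇑χ) := subset_seg _ h1
  exact Finset.mem_image.mpr ⟨χ x, h2, by simp⟩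

lemma frakS_subset_block {n : ℕ} {χ : Equiv.Perm (Fin n)} {J B : Finset (Fin n)}
    (hB : IsBlockF χ B) (h : J ⊆ B) : frakS χ J ⊆ B := by
  have h1 : seg J ⊆ B := seg_subset_of_segment hB.1 h
  have h2 : (seg J).image ⇑χ ⊆ B.image ⇑χ := Finset.image_subset_image h1
  have h3 : seg ((seg J).image ⇑χ) ⊆ B.image ⇑χ := seg_subset_of_segment hB.2 h2
  intro x hx
  obtain ⟨y, hy, rfl⟩ := Finset.mem_image.mp hx
  obtain ⟨b, hb, rfl⟩ := Finset.mem_image.mp (h3 hy)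
  simpa using hb

lemma frakS_self {n : ℕ} {χ : Equiv.Perm (Fin n)} {B : Finset (Fin n)}
    (hB : IsBlockF χ B) : frakS χ B = B :=
  subset_antisymm (frakS_subset_block hB (subset_refl B)) (subset_frakS χ B)

lemma block_of_fixed {n : ℕ} {χ : Equiv.Perm (Fin n)} {J : Finset (Fin n)}
    (hJ : J.Nonempty) (h : frakS χ J = J) : IsBlockF χ J := by
  have hsub : seg J ⊆ frakS χ J := by
    intro x hx
    have h1 : χ x ∈ (seg J).image ⇑χ := Finset.mem_image.mpr ⟨x, hx, rfl⟩
    exact Finset.mem_image.mpr ⟨χ x, subset_seg _ h1, by simp⟩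
  rw [h] at hsub
  have hseg : seg J = J := subset_antisymm hsub (subset_seg J)
  have himg : seg (J.image ⇑χ) = J.image ⇑χ := by
    have h' : (seg (J.image ⇑χ)).image ⇑χ.symm = J := by
      have := h
      unfold frakS at this
      rwa [hseg] at this
    have := congrArg (Finset.image (⇑χ)) h'
    rw [Finset.image_image] at this
    simpa using this
  constructor
  · rw [← hseg]; exact segment_seg J hJ
  · rw [← himg]; exact segment_seg _ (hJ.image _)

/-- For every `k ≥ 1`: `𝔖^k(J) ⊆ 𝔖^{k+1}(J)`, `𝔖^k(J) ⊆ B_χ(J)` (the minimal block of `χ`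
containing `J`), and `𝔖^{k+1}(J) = 𝔖^k(J)` if and only if `𝔖^k(J) = B_χ(J)`. -/
theorem frakS_iterate {n : ℕ} (χ : Equiv.Perm (Fin n)) (J : Finset (Fin n)) (hJ : J.Nonempty)
    (B : Finset (Fin n)) (hB : IsBlockF χ B) (hJB : J ⊆ B)
    (hmin : ∀ B' : Finset (Fin n), IsBlockF χ B' → J ⊆ B' → B ⊆ B')
    (k : ℕ) (hk : 1 ≤ k) :
    (frakS χ)^[k] J ⊆ (frakS χ)^[k + 1] J ∧
    (frakS χ)^[k] J ⊆ B ∧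
    ((frakS χ)^[k + 1] J = (frakS χ)^[k] J ↔ (frakS χ)^[k] J = B) := by
  have hJsub : ∀ m : ℕ, J ⊆ (frakS χ)^[m] J := by
    intro m
    induction m with
    | zero => simp
    | succ m ih =>
      rw [Function.iterate_succ_apply']
      exact ih.trans (subset_frakS χ _)
  have hsubB : ∀ m : ℕ, (frakS χ)^[m] J ⊆ B := by
    intro m
    induction m with
    | zero => simpa
    | succ m ih =>
      rw [Function.iterate_succ_apply']
      exact frakS_subset_block hB ih
  have hstep : (frakS χ)^[k + 1] J = frakS χ ((frakS χ)^[k] J) :=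
    Function.iterate_succ_apply' _ _ _
  refine ⟨?_, hsubB k, ?_, ?_⟩
  · rw [hstep]; exact subset_frakS χ _
  · intro h
    rw [hstep] at h
    have hblk : IsBlockF χ ((frakS χ)^[k] J) :=
      block_of_fixed (hJ.mono (hJsub k)) h
    exact subset_antisymm (hsubB k) (hmin _ hblk (hJsub k))
  · intro h
    rw [hstep, h, frakS_self hB]
end

section
/- Let λ₀, ..., λ_{n-1} be elements of a set with a symmetric tangency-order function tord satisfying the non-archimedean inequality tord(a,c) ≥ min(tord(a,b), tord(b,c)), and suppose the points are 'monotone' in the sense that tord(λ_i, λ_l) = min(tord(λ_i, λ_k), tord(λ_k, λ_l)) for all i < k < l. Let π be a permutation of [n] and suppose that for all distinct i, j the block inequality tord(λ_i, λ_j) ≤ tord(λ_k, λ_l) holds whenever {k,l} ⊆ B_π({i,j}), where B_π(J) denotes the minimal block of π containing J. Define λ'_{π(i)} = λ_i. Then for all j < k < l in [n], tord(λ'_j, λ'_l) = min(tord(λ'_j, λ'_k), tord(λ'_k, λ'_l)). -/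
/-- A segment of `[n] = {0,…,n-1}` : a nonempty set of consecutive indices. -/
def IsSegment {n : ℕ} (S : Set (Fin n)) : Prop :=
  S.Nonempty ∧ ∀ a ∈ S, ∀ c ∈ S, ∀ b : Fin n, a ≤ b → b ≤ c → b ∈ S

/-- A block of a permutation `π` of `[n]` : a segment whose image under `π` is a segment. -/
def IsBlock {n : ℕ} (π : Equiv.Perm (Fin n)) (B : Set (Fin n)) : Prop :=
  IsSegment B ∧ IsSegment (⇑π '' B)

/-- If the family `λ_0,…,λ_{n-1}` is monotone for the tangency order, and the block
inequalities hold (`tord(λ_i,λ_j) ≤ tord(λ_k,λ_l)` whenever `{k,l}` is contained in the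
minimal block of `π` containing `{i,j}`, i.e. `k,l` belong to every block containing `i,j`),
then the reordered family `λ'_{π(i)} = λ_i` is again monotone. -/
theorem reordered_family_monotone {V E : Type*} [LinearOrder E] [OrderTop E] {n : ℕ}
    (tord : V → V → E)
    (hsymm : ∀ a b, tord a b = tord b a)
    (hna : ∀ a b c, min (tord a b) (tord b c) ≤ tord a c)
    (lam : Fin n → V)
    (hmono : ∀ i k l : Fin n, i < k → k < l →
      tord (lam i) (lam l) = min (tord (lam i) (lam k)) (tord (lam k) (lam l)))
    (π : Equiv.Perm (Fin n))
    (hblock : ∀ i j k l : Fin n, i ≠ j →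
      (∀ B : Set (Fin n), IsBlock π B → i ∈ B → j ∈ B → k ∈ B ∧ l ∈ B) →
      tord (lam i) (lam j) ≤ tord (lam k) (lam l))
    (lam' : Fin n → V) (hlam' : ∀ i, lam' (π i) = lam i) :
    ∀ j k l : Fin n, j < k → k < l →
      tord (lam' j) (lam' l) = min (tord (lam' j) (lam' k)) (tord (lam' k) (lam' l)) := by
  intro j k l hjk hkl
  have ha : lam' j = lam (π.symm j) := by
    conv_lhs => rw [← Equiv.apply_symm_apply π j]
    exact hlam' _
  have hb : lam' k = lam (π.symm k) := by
    conv_lhs => rw [← Equiv.apply_symm_apply π k]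
    exact hlam' _
  have hc : lam' l = lam (π.symm l) := by
    conv_lhs => rw [← Equiv.apply_symm_apply π l]
    exact hlam' _
  rw [ha, hb, hc]
  have hac : π.symm j ≠ π.symm l :=
    fun h => absurd (π.symm.injective h) (hjk.trans hkl).ne
  have hmemb : ∀ B : Set (Fin n), IsBlock π B → π.symm j ∈ B → π.symm l ∈ B →
      π.symm k ∈ B := by
    intro B hB hjB hlB
    have him : k ∈ ⇑π '' B := by
      have := hB.2.2 (π (π.symm j)) (Set.mem_image_of_mem _ hjB)
        (π (π.symm l)) (Set.mem_image_of_mem _ hlB) k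
        (by simpa using hjk.le) (by simpa using hkl.le)
      exact this
    obtain ⟨x, hxB, hx⟩ := him
    have hxk : x = π.symm k := by
      apply π.injective; simp [hx]
    rwa [← hxk]
  have h1 : tord (lam (π.symm j)) (lam (π.symm l)) ≤
      tord (lam (π.symm j)) (lam (π.symm k)) :=
    hblock _ _ _ _ hac (fun B hB haB hcB => ⟨haB, hmemb B hB haB hcB⟩)
  have h2 : tord (lam (π.symm j)) (lam (π.symm l)) ≤
      tord (lam (π.symm k)) (lam (π.symm l)) :=
    hblock _ _ _ _ hac (fun B hB haB hcB => ⟨hmemb B hB haB hcB, hcB⟩)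
  exact le_antisymm (le_min h1 h2) (hna _ _ _)
end

section
/- Let β, q̲ ∈ ℚ with β ≥ 1, let q̃ ∈ ℚ ∪ {∞} with q̃ ≠ q̲, and let μ(q) = a(q - α) be a non-constant affine function on Q = [q̲, q̃] with values in ℚ ∪ {∞}, satisfying μ(q) ≤ q for all q ∈ Q and min_{q∈Q} μ(q) = μ(q̲) = β ≥ 1. Suppose 0 < a ≤ 1 and κ := μ(q̃) = ∞ (so the domain is the full standard β-Hölder triangle T_β = {(u,v) : u ≥ 0, 0 ≤ v ≤ u^β}). Then the function φ(u,v) = u^α v^{1/a} is Lipschitz on T_β near the origin. -/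
open Real

private lemma mvt_rpow (s M x y : ℝ) (hs : 1 ≤ s) (hx : x ∈ Set.Icc 0 M)
    (hy : y ∈ Set.Icc 0 M) : |y ^ s - x ^ s| ≤ s * M ^ (s - 1) * |y - x| := by
  have h := Convex.norm_image_sub_le_of_norm_hasDerivWithin_le
    (f := fun t : ℝ => t ^ s) (f' := fun t : ℝ => s * t ^ (s - 1))
    (C := s * M ^ (s - 1)) (s := Set.Icc 0 M)
    (fun t _ => (Real.hasDerivAt_rpow_const (Or.inr hs)).hasDerivWithinAt)
    (fun t ht => by
      have h1 : t ^ (s - 1) ≤ M ^ (s - 1) :=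
        Real.rpow_le_rpow ht.1 ht.2 (by linarith)
      have h2 : (0:ℝ) ≤ t ^ (s - 1) := Real.rpow_nonneg ht.1 _
      rw [Real.norm_eq_abs, abs_mul, abs_of_nonneg (by linarith : (0:ℝ) ≤ s),
        abs_of_nonneg h2]
      exact mul_le_mul_of_nonneg_left h1 (by linarith))
    (convex_Icc 0 M) hx hy
  simpa [Real.norm_eq_abs] using h

private lemma lemA (α c x y : ℝ) (hx : 0 < x) (hxy : x ≤ y) (hy1 : y ≤ 1)
    (hc : 0 ≤ c) (hca : 1 ≤ c + α) :
    x ^ c * |y ^ α - x ^ α| ≤ |α| * (y - x) := by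
  have hy0 : 0 < y := lt_of_lt_of_le hx hxy
  have hxc1 : x ^ c ≤ 1 := Real.rpow_le_one hx.le (le_trans hxy hy1) hc
  have hxc0 : (0:ℝ) ≤ x ^ c := Real.rpow_nonneg hx.le _
  rcases le_or_gt α 1 with hα | hα
  · -- bound derivative by |α| * x ^ (α - 1)
    have h := Convex.norm_image_sub_le_of_norm_hasDerivWithin_le
      (f := fun t : ℝ => t ^ α) (f' := fun t : ℝ => α * t ^ (α - 1))
      (C := |α| * x ^ (α - 1)) (s := Set.Icc x y)
      (fun t ht => (Real.hasDerivAt_rpow_const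
        (Or.inl (ne_of_gt (lt_of_lt_of_le hx ht.1)))).hasDerivWithinAt)
      (fun t ht => by
        have htx : x ≤ t := ht.1
        have ht0 : 0 < t := lt_of_lt_of_le hx htx
        have h1 : t ^ (α - 1) ≤ x ^ (α - 1) :=
          Real.rpow_le_rpow_of_nonpos hx htx (by linarith)
        have h2 : (0:ℝ) ≤ t ^ (α - 1) := Real.rpow_nonneg ht0.le _
        rw [Real.norm_eq_abs, abs_mul, abs_of_nonneg h2]
        exact mul_le_mul_of_nonneg_left h1 (abs_nonneg _))
      (convex_Icc x y) ⟨le_refl x, hxy⟩ ⟨hxy, le_refl y⟩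
    rw [Real.norm_eq_abs, Real.norm_eq_abs, abs_of_nonneg (by linarith : (0:ℝ) ≤ y - x)] at h
    calc x ^ c * |y ^ α - x ^ α| ≤ x ^ c * (|α| * x ^ (α - 1) * (y - x)) :=
          mul_le_mul_of_nonneg_left h hxc0
      _ = |α| * (x ^ c * x ^ (α - 1)) * (y - x) := by ring
      _ = |α| * x ^ (c + (α - 1)) * (y - x) := by rw [← Real.rpow_add hx]
      _ ≤ |α| * 1 * (y - x) := by
          apply mul_le_mul_of_nonneg_right _ (by linarith : (0:ℝ) ≤ y - x)
          exact mul_le_mul_of_nonneg_left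
            (Real.rpow_le_one hx.le (le_trans hxy hy1) (by linarith)) (abs_nonneg _)
      _ = |α| * (y - x) := by ring
  · -- α > 1: derivative bounded by α on [0,1]
    have h := Convex.norm_image_sub_le_of_norm_hasDerivWithin_le
      (f := fun t : ℝ => t ^ α) (f' := fun t : ℝ => α * t ^ (α - 1))
      (C := α) (s := Set.Icc x y)
      (fun t ht => (Real.hasDerivAt_rpow_const
        (Or.inl (ne_of_gt (lt_of_lt_of_le hx ht.1)))).hasDerivWithinAt)
      (fun t ht => by
        have ht0 : 0 < t := lt_of_lt_of_le hx ht.1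
        have h1 : t ^ (α - 1) ≤ 1 :=
          Real.rpow_le_one ht0.le (le_trans ht.2 hy1) (by linarith)
        have h2 : (0:ℝ) ≤ t ^ (α - 1) := Real.rpow_nonneg ht0.le _
        rw [Real.norm_eq_abs, abs_mul, abs_of_nonneg h2,
          abs_of_nonneg (by linarith : (0:ℝ) ≤ α)]
        nlinarith)
      (convex_Icc x y) ⟨le_refl x, hxy⟩ ⟨hxy, le_refl y⟩
    rw [Real.norm_eq_abs, Real.norm_eq_abs, abs_of_nonneg (by linarith : (0:ℝ) ≤ y - x)] at h
    calc x ^ c * |y ^ α - x ^ α| ≤ 1 * (α * (y - x)) :=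
          mul_le_mul hxc1 h (abs_nonneg _) zero_le_one
      _ = |α| * (y - x) := by rw [abs_of_nonneg (by linarith : (0:ℝ) ≤ α)]; ring

/-- Key pointwise estimate, with `u ≤ u'`. -/
private lemma key (β α s : ℝ) (hβ1 : 1 ≤ β) (hs : 1 ≤ s) (hq : β ≤ α + β * s)
    (u v u' v' : ℝ) (hu0 : 0 ≤ u) (huu : u ≤ u') (hu1 : u' ≤ 1)
    (hv0 : 0 ≤ v) (hvb : v ≤ u ^ β) (hv'0 : 0 ≤ v') (hv'b : v' ≤ u' ^ β) :
    |u ^ α * v ^ s - u' ^ α * v' ^ s| ≤ (|α| + s) * (|u' - u| + |v' - v|) := by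
  have hs0 : (0:ℝ) < s := by linarith
  have hRHSfac : (1:ℝ) ≤ |α| + s := le_add_of_nonneg_of_le (abs_nonneg _) hs
  rcases eq_or_lt_of_le hu0 with hu0' | hupos
  · -- u = 0, hence v = 0
    have hu : u = 0 := hu0'.symm
    have hv : v = 0 := le_antisymm (by
      simpa [hu, Real.zero_rpow (by linarith : β ≠ 0)] using hvb) hv0
    have hzero : u ^ α * v ^ s = 0 := by
      simp [hv, Real.zero_rpow (ne_of_gt hs0)]
    rw [hzero, zero_sub, abs_neg]
    rcases eq_or_lt_of_le (hu ▸ huu : (0:ℝ) ≤ u') with hu' | hu'pos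
    · have hv' : v' = 0 := le_antisymm (by
        simpa [← hu', Real.zero_rpow (by linarith : β ≠ 0)] using hv'b) hv'0
      simp only [hv', Real.zero_rpow (ne_of_gt hs0), mul_zero, abs_zero]
      positivity
    · have h1 : u' ^ α * v' ^ s ≤ u' ^ α * (u' ^ β) ^ s :=
        mul_le_mul_of_nonneg_left (Real.rpow_le_rpow hv'0 hv'b hs0.le)
          (Real.rpow_nonneg (by linarith) _)
      have h2 : u' ^ α * (u' ^ β) ^ s = u' ^ (α + β * s) := by
        rw [← Real.rpow_mul (by linarith : (0:ℝ) ≤ u'), ← Real.rpow_add hu'pos]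
      have h3 : u' ^ (α + β * s) ≤ u' ^ (1:ℝ) :=
        Real.rpow_le_rpow_of_exponent_ge hu'pos hu1 (by linarith)
      have h4 : u' ^ α * v' ^ s ≤ u' := by
        rw [Real.rpow_one] at h3; calc u' ^ α * v' ^ s ≤ u' ^ (α + β * s) := h2 ▸ h1
          _ ≤ u' := h3
      have habs : |u' ^ α * v' ^ s| = u' ^ α * v' ^ s :=
        abs_of_nonneg (mul_nonneg (Real.rpow_nonneg (by linarith) _)
          (Real.rpow_nonneg hv'0 _))
      rw [habs]
      have : u' ≤ |u' - u| + |v' - v| := by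
        rw [hu, hv, sub_zero, sub_zero, abs_of_nonneg hu'pos.le, abs_of_nonneg hv'0]
        linarith
      calc u' ^ α * v' ^ s ≤ u' := h4
        _ = 1 * u' := (one_mul _).symm
        _ ≤ (|α| + s) * (|u' - u| + |v' - v|) := by
            apply mul_le_mul hRHSfac this hu'pos.le (by linarith)
  · -- 0 < u
    have hu'pos : 0 < u' := lt_of_lt_of_le hupos huu
    have hv1 : v ≤ u' ^ β := le_trans hvb
      (Real.rpow_le_rpow hupos.le huu (by linarith))
    -- triangle inequality through (u', v)
    have tri : |u ^ α * v ^ s - u' ^ α * v' ^ s| ≤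
        v ^ s * |u ^ α - u' ^ α| + u' ^ α * |v ^ s - v' ^ s| := by
      have : u ^ α * v ^ s - u' ^ α * v' ^ s
          = v ^ s * (u ^ α - u' ^ α) + u' ^ α * (v ^ s - v' ^ s) := by ring
      rw [this]
      refine le_trans (abs_add_le _ _) ?_
      rw [abs_mul, abs_mul, abs_of_nonneg (Real.rpow_nonneg hv0 s),
        abs_of_nonneg (Real.rpow_nonneg hu'pos.le α)]
    -- term 1
    have t1 : v ^ s * |u ^ α - u' ^ α| ≤ |α| * (u' - u) := by
      have hv2 : v ^ s ≤ u ^ (β * s) := by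
        rw [Real.rpow_mul hupos.le]
        exact Real.rpow_le_rpow hv0 hvb hs0.le
      have := lemA α (β * s) u u' hupos huu hu1
        (by positivity) (by linarith)
      calc v ^ s * |u ^ α - u' ^ α| ≤ u ^ (β * s) * |u ^ α - u' ^ α| :=
            mul_le_mul_of_nonneg_right hv2 (abs_nonneg _)
        _ = u ^ (β * s) * |u' ^ α - u ^ α| := by rw [abs_sub_comm]
        _ ≤ |α| * (u' - u) := this
    -- term 2
    have t2 : u' ^ α * |v ^ s - v' ^ s| ≤ s * |v - v'| := by
      have hM : (0:ℝ) ≤ u' ^ β := Real.rpow_nonneg hu'pos.le _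
      have hmvt := mvt_rpow s (u' ^ β) v' v hs ⟨hv'0, hv'b⟩ ⟨hv0, hv1⟩
      have hpow : u' ^ α * (u' ^ β) ^ (s - 1) = u' ^ (α + β * (s - 1)) := by
        rw [← Real.rpow_mul hu'pos.le, ← Real.rpow_add hu'pos]
      have hle1 : u' ^ (α + β * (s - 1)) ≤ 1 :=
        Real.rpow_le_one hu'pos.le hu1 (by nlinarith)
      calc u' ^ α * |v ^ s - v' ^ s|
          ≤ u' ^ α * (s * (u' ^ β) ^ (s - 1) * |v - v'|) :=
            mul_le_mul_of_nonneg_left hmvt (Real.rpow_nonneg hu'pos.le _)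
        _ = s * (u' ^ α * (u' ^ β) ^ (s - 1)) * |v - v'| := by ring
        _ = s * u' ^ (α + β * (s - 1)) * |v - v'| := by rw [hpow]
        _ ≤ s * 1 * |v - v'| := by
            apply mul_le_mul_of_nonneg_right _ (abs_nonneg _)
            exact mul_le_mul_of_nonneg_left hle1 hs0.le
        _ = s * |v - v'| := by ring
    have habs1 : u' - u ≤ |u' - u| := le_abs_self _
    have habs2 : |v - v'| = |v' - v| := abs_sub_comm _ _
    calc |u ^ α * v ^ s - u' ^ α * v' ^ s|
        ≤ v ^ s * |u ^ α - u' ^ α| + u' ^ α * |v ^ s - v' ^ s| := tri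
      _ ≤ |α| * (u' - u) + s * |v - v'| := add_le_add t1 t2
      _ ≤ |α| * |u' - u| + s * |v' - v| := by
          rw [habs2] at *
          exact add_le_add (mul_le_mul_of_nonneg_left habs1 (abs_nonneg _)) le_rfl
      _ ≤ (|α| + s) * (|u' - u| + |v' - v|) := by
          have h1 : (0:ℝ) ≤ |α| := abs_nonneg _
          have h2 : (0:ℝ) ≤ |u' - u| := abs_nonneg _
          have h3 : (0:ℝ) ≤ |v' - v| := abs_nonneg _
          nlinarith

/-- Case `0 < a ≤ 1`, `κ = ∞` of the Lemma on standard pizza slices: let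
`β, q̲, α, a ∈ ℚ`, `β ≥ 1`, `0 < a ≤ 1`, let `μ(q) = a (q - α)` satisfy `μ(q) ≤ q`
for all `q ≥ q̲` and `μ(q̲) = β`. Then the function `φ(u,v) = u^α v^(1/a)` is Lipschitz
near the origin on the standard β-Hölder triangle
`T_β = {(u,v) : u ≥ 0, 0 ≤ v ≤ u^β}`. -/
theorem phi_lipschitz_on_standard_triangle (β qlow α a : ℚ)
    (hβ : 1 ≤ β) (ha0 : 0 < a) (ha1 : a ≤ 1)
    (hμle : ∀ q : ℚ, qlow ≤ q → a * (q - α) ≤ q)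
    (hmin : a * (qlow - α) = β) :
    ∃ C > (0 : ℝ), ∃ ε > (0 : ℝ), ∀ p p' : ℝ × ℝ,
      0 ≤ p.1 → 0 ≤ p.2 → p.2 ≤ p.1 ^ (β : ℝ) →
      0 ≤ p'.1 → 0 ≤ p'.2 → p'.2 ≤ p'.1 ^ (β : ℝ) →
      ‖p‖ < ε → ‖p'‖ < ε →
      |p.1 ^ (α : ℝ) * p.2 ^ (1 / (a : ℝ)) - p'.1 ^ (α : ℝ) * p'.2 ^ (1 / (a : ℝ))| ≤
        C * dist p p' := by
  -- rational facts
  have hqβ : β ≤ qlow := by simpa [hmin] using hμle qlow le_rfl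
  have hrel : α + β * (1 / a) = qlow := by
    field_simp at hmin ⊢
    linarith [hmin]
  -- real versions
  have hβ1 : (1:ℝ) ≤ (β:ℝ) := by exact_mod_cast hβ
  have ha0' : (0:ℝ) < (a:ℝ) := by exact_mod_cast ha0
  have ha1' : (a:ℝ) ≤ 1 := by exact_mod_cast ha1
  have hs : (1:ℝ) ≤ 1 / (a:ℝ) := by
    rw [le_div_iff₀ ha0']; linarith
  have hq : (β:ℝ) ≤ (α:ℝ) + (β:ℝ) * (1 / (a:ℝ)) := by
    have h1 : ((α + β * (1 / a) : ℚ) : ℝ) = (α:ℝ) + (β:ℝ) * (1 / (a:ℝ)) := by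
      push_cast; ring
    rw [← h1, hrel]
    exact_mod_cast hqβ
  refine ⟨2 * (|(α:ℝ)| + 1 / (a:ℝ)), by positivity, 1, one_pos, ?_⟩
  intro p p' hp1 hp2 hpb hp'1 hp'2 hp'b hpn hp'n
  have hple : p.1 ≤ 1 := le_trans (le_trans (le_abs_self _)
    (by simpa using norm_fst_le p)) hpn.le
  have hp'le : p'.1 ≤ 1 := le_trans (le_trans (le_abs_self _)
    (by simpa using norm_fst_le p')) hp'n.le
  have hd1 : |p'.1 - p.1| ≤ dist p p' := by
    rw [abs_sub_comm, ← Real.dist_eq, Prod.dist_eq]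
    exact le_max_left _ _
  have hd2 : |p'.2 - p.2| ≤ dist p p' := by
    rw [abs_sub_comm, ← Real.dist_eq, Prod.dist_eq]
    exact le_max_right _ _
  have hfac : (0:ℝ) ≤ |(α:ℝ)| + 1 / (a:ℝ) := by positivity
  rcases le_total p.1 p'.1 with hle | hle
  · have := key (β:ℝ) (α:ℝ) (1 / (a:ℝ)) hβ1 hs hq p.1 p.2 p'.1 p'.2
      hp1 hle hp'le hp2 hpb hp'2 hp'b
    calc |p.1 ^ (α:ℝ) * p.2 ^ (1 / (a:ℝ)) - p'.1 ^ (α:ℝ) * p'.2 ^ (1 / (a:ℝ))|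
        ≤ (|(α:ℝ)| + 1 / (a:ℝ)) * (|p'.1 - p.1| + |p'.2 - p.2|) := this
      _ ≤ (|(α:ℝ)| + 1 / (a:ℝ)) * (dist p p' + dist p p') :=
          mul_le_mul_of_nonneg_left (add_le_add hd1 hd2) hfac
      _ = 2 * (|(α:ℝ)| + 1 / (a:ℝ)) * dist p p' := by ring
  · have := key (β:ℝ) (α:ℝ) (1 / (a:ℝ)) hβ1 hs hq p'.1 p'.2 p.1 p.2
      hp'1 hle hple hp'2 hp'b hp2 hpb
    rw [abs_sub_comm] at this
    calc |p.1 ^ (α:ℝ) * p.2 ^ (1 / (a:ℝ)) - p'.1 ^ (α:ℝ) * p'.2 ^ (1 / (a:ℝ))|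
        ≤ (|(α:ℝ)| + 1 / (a:ℝ)) * (|p.1 - p'.1| + |p.2 - p'.2|) := this
      _ ≤ (|(α:ℝ)| + 1 / (a:ℝ)) * (dist p p' + dist p p') := by
          refine mul_le_mul_of_nonneg_left (add_le_add ?_ ?_) hfac
          · rw [abs_sub_comm]; exact hd1
          · rw [abs_sub_comm]; exact hd2
      _ = 2 * (|(α:ℝ)| + 1 / (a:ℝ)) * dist p p' := by ring
end
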